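/- arXiv:0801.1966 — 2 statements merged into one kernel-verified Lean document; each statement's English description precedes it below -/
import Mathlib

section
/- Let 𝒯 be a monoid of transformations of a nonempty set X, and let 𝒦 be a set of gambles on X that is negation-invariant (−f ∈ 𝒦 whenever f ∈ 𝒦), 𝒯-invariant (f∘T ∈ 𝒦 whenever f ∈ 𝒦, T ∈ 𝒯), and such that f − f∘T ∈ 𝒦 and f∘T − f ∈ 𝒦 for all f ∈ 𝒦, T ∈ 𝒯. Then: (1) a coherent prevision P on 𝒦 satisfies P(f∘T) ≥ P(f) for all f ∈ 𝒦 and T ∈ 𝒯 if and only if P(f − f∘T) ≥ 0 and P(f∘T − f) ≥ 0 for all f ∈ 𝒦 and T ∈ 𝒯 (weak invariance is equivalent to strong invariance for previsions); (2) a coherent lower prevision L on 𝒦 satisfies L(f − f∘T) ≥ 0 and L(f∘T − f) ≥ 0 for all f ∈ 𝒦, T ∈ 𝒯 if and only if every coherent prevision P on all gambles with P(f) ≥ L(f) for all f ∈ 𝒦 satisfies P(f∘T) = P(f) for all f ∈ 𝒦, T ∈ 𝒯. -/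
def IsGamble {X : Type*} (f : X → ℝ) : Prop :=
  BddAbove (Set.range f) ∧ BddBelow (Set.range f)

def IsCoherentLowerPrevision {X : Type*} (L : (X → ℝ) → ℝ) : Prop :=
  (∀ f : X → ℝ, IsGamble f → sInf (Set.range f) ≤ L f) ∧
  (∀ f g : X → ℝ, IsGamble f → IsGamble g → L f + L g ≤ L (f + g)) ∧
  (∀ f : X → ℝ, IsGamble f → ∀ c : ℝ, 0 ≤ c → L (c • f) = c * L f)

def IsCoherentPrevision {X : Type*} (P : (X → ℝ) → ℝ) : Prop :=
  (∀ f g : X → ℝ, IsGamble f → IsGamble g → P (f + g) = P f + P g) ∧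
  (∀ f : X → ℝ, IsGamble f → sInf (Set.range f) ≤ P f)

def IsTransformationMonoid {X : Type*} (𝒯 : Set (X → X)) : Prop :=
  id ∈ 𝒯 ∧ ∀ S ∈ 𝒯, ∀ T ∈ 𝒯, S ∘ T ∈ 𝒯

def Dominating {X : Type*} (L : (X → ℝ) → ℝ) : Set ((X → ℝ) → ℝ) :=
  {P | IsCoherentPrevision P ∧ ∀ f : X → ℝ, IsGamble f → L f ≤ P f}

def IsCoherentPrevisionOn {X : Type*} (𝒦 : Set (X → ℝ)) (P : (X → ℝ) → ℝ) : Prop :=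
  ∃ Q : (X → ℝ) → ℝ, IsCoherentPrevision Q ∧ ∀ f ∈ 𝒦, P f = Q f

def IsCoherentLowerPrevisionOn {X : Type*} (𝒦 : Set (X → ℝ)) (L : (X → ℝ) → ℝ) : Prop :=
  ∃ M : (X → ℝ) → ℝ, IsCoherentLowerPrevision M ∧ ∀ f ∈ 𝒦, L f = M f

/-! Weak invariance applied to `f` and `-f` forces `P (f ∘ T) = P f`, which for a linear `P` is
the same as `P (f - f ∘ T) = 0 = P (f ∘ T - f)`. For a coherent lower prevision `L`, strong
invariance passes to every dominating prevision. Conversely, Hahn–Banach applied to the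
sublinear functional `f ↦ -L (-f)` on the space of gambles shows that `L` is the lower envelope
of its dominating previsions, with the infimum attained at every gamble; evaluating at
`f - f ∘ T` and `f ∘ T - f` gives strong invariance of `L`. -/

section Sublinear

variable {E : Type*} [AddCommGroup E] [Module ℝ E]

theorem exists_linearMap_le_sublinear_eq (N : E → ℝ)
    (N_hom : ∀ c : ℝ, 0 < c → ∀ x, N (c • x) = c * N x) (N_add : ∀ x y, N (x + y) ≤ N x + N y)
    (x₀ : E) : ∃ g : E →ₗ[ℝ] ℝ, (∀ x, g x ≤ N x) ∧ g x₀ = N x₀ := by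
  have N_zero : N 0 = 0 := by
    have h := N_hom 2 two_pos 0
    rw [smul_zero] at h
    linarith
  have N_neg_add : 0 ≤ N x₀ + N (-x₀) := by simpa [N_zero] using N_add x₀ (-x₀)
  have hN : ∀ c : ℝ, c * N x₀ ≤ N (c • x₀) := by
    intro c
    rcases lt_trichotomy c 0 with hc | rfl | hc
    · rw [← neg_neg c, neg_smul, ← smul_neg, N_hom _ (neg_pos.2 hc)]
      nlinarith
    · simp [N_zero]
    · rw [N_hom c hc]
  let f : E →ₗ.[ℝ] ℝ := LinearPMap.mkSpanSingleton' (σ := RingHom.id ℝ) x₀ (N x₀) fun c hc => by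
    rcases smul_eq_zero.1 hc with rfl | rfl
    · exact zero_smul _ _
    · simp [N_zero]
  obtain ⟨g, hgf, hgN⟩ := exists_extension_of_le_sublinear f N N_hom N_add fun ⟨x, hx⟩ => by
    obtain ⟨c, rfl⟩ := Submodule.mem_span_singleton.1 hx
    exact (LinearPMap.mkSpanSingleton'_apply _ _ _ c hx).trans_le (hN c)
  refine ⟨g, hgN, ?_⟩
  rw [hgf ⟨x₀, Submodule.mem_span_singleton_self x₀⟩]
  exact LinearPMap.mkSpanSingleton'_apply_self _ _ _ _

end Sublinear

section Gamble

variable {X : Type*} {f g : X → ℝ}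

theorem isGamble_iff_exists_abs_le : IsGamble f ↔ ∃ C, ∀ x, |f x| ≤ C := by
  rw [IsGamble, and_comm, ← isBounded_iff_bddBelow_bddAbove, isBounded_iff_forall_norm_le]
  simp [Real.norm_eq_abs]

theorem IsGamble.add (hf : IsGamble f) (hg : IsGamble g) : IsGamble (f + g) := by
  obtain ⟨C, hC⟩ := isGamble_iff_exists_abs_le.1 hf
  obtain ⟨D, hD⟩ := isGamble_iff_exists_abs_le.1 hg
  exact isGamble_iff_exists_abs_le.2
    ⟨C + D, fun x => (abs_add_le _ _).trans (add_le_add (hC x) (hD x))⟩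

theorem IsGamble.smul (hf : IsGamble f) (c : ℝ) : IsGamble (c • f) := by
  obtain ⟨C, hC⟩ := isGamble_iff_exists_abs_le.1 hf
  refine isGamble_iff_exists_abs_le.2 ⟨|c| * C, fun x => ?_⟩
  rw [Pi.smul_apply, smul_eq_mul, abs_mul]
  exact mul_le_mul_of_nonneg_left (hC x) (abs_nonneg c)

theorem IsGamble.comp (hf : IsGamble f) (T : X → X) : IsGamble (f ∘ T) :=
  ⟨hf.1.range_comp_right T, hf.2.range_comp_right T⟩

variable (X) in
def gambleSubmodule : Submodule ℝ (X → ℝ) where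
  carrier := {f | IsGamble f}
  add_mem' := IsGamble.add
  zero_mem' := isGamble_iff_exists_abs_le.2 ⟨0, fun _ => by simp⟩
  smul_mem' c _ hf := hf.smul c

theorem IsGamble.neg (hf : IsGamble f) : IsGamble (-f) := (gambleSubmodule X).neg_mem hf

theorem IsGamble.sub (hf : IsGamble f) (hg : IsGamble g) : IsGamble (f - g) :=
  (gambleSubmodule X).sub_mem hf hg

end Gamble

namespace IsCoherentPrevision

variable {X : Type*} {P : (X → ℝ) → ℝ} {f g : X → ℝ}

theorem map_sub (hP : IsCoherentPrevision P) (hf : IsGamble f) (hg : IsGamble g) :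
    P (f - g) = P f - P g := by
  have h := hP.1 (f - g) g (hf.sub hg) hg
  rw [sub_add_cancel] at h
  linarith

theorem map_neg (hP : IsCoherentPrevision P) (hf : IsGamble f) : P (-f) = -P f := by
  have h₀ : P 0 = 0 := by simpa using hP.map_sub hf hf
  rw [← zero_sub, hP.map_sub (gambleSubmodule X).zero_mem hf, h₀, zero_sub]

theorem eq_iff_zero_le_map_sub (hP : IsCoherentPrevision P) (hf : IsGamble f) (hg : IsGamble g) :
    P g = P f ↔ 0 ≤ P (f - g) ∧ 0 ≤ P (g - f) := by
  rw [hP.map_sub hf hg, hP.map_sub hg hf, sub_nonneg, sub_nonneg, le_antisymm_iff, and_comm]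

end IsCoherentPrevision

namespace IsCoherentLowerPrevision

variable {X : Type*} {M : (X → ℝ) → ℝ}

theorem exists_mem_dominating_eq (hM : IsCoherentLowerPrevision M) {g₀ : X → ℝ}
    (hg₀ : IsGamble g₀) : ∃ P ∈ Dominating M, P g₀ = M g₀ := by
  classical
  let N : gambleSubmodule X → ℝ := fun v => -M (-v)
  have N_hom : ∀ c : ℝ, 0 < c → ∀ v, N (c • v) = c * N v := fun c hc v => by
    simp only [N, Submodule.coe_smul, ← smul_neg, hM.2.2 _ (v.2.neg) c hc.le, mul_neg]
  have N_add : ∀ v w, N (v + w) ≤ N v + N w := fun v w => by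
    have h := hM.2.1 _ _ v.2.neg w.2.neg
    simp only [N, Submodule.coe_add, neg_add]
    linarith
  -- `φ ≤ N` says `M ≤ φ`, and equality at `-g₀` is equality `φ g₀ = M g₀`.
  obtain ⟨φ, hφN, hφg₀⟩ := exists_linearMap_le_sublinear_eq N N_hom N_add (-⟨g₀, hg₀⟩)
  have hMφ : ∀ v : gambleSubmodule X, M v ≤ φ v := fun v => by
    have h := hφN (-v)
    simp only [N, map_neg, Submodule.coe_neg, neg_neg] at h
    linarith
  let P : (X → ℝ) → ℝ := fun f => if hf : f ∈ gambleSubmodule X then φ ⟨f, hf⟩ else 0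
  have hPφ : ∀ f (hf : IsGamble f), P f = φ ⟨f, hf⟩ := fun f hf => dif_pos hf
  refine ⟨P, ⟨⟨fun f g hf hg => ?_, fun f hf => ?_⟩, fun f hf => ?_⟩, ?_⟩
  · rw [hPφ f hf, hPφ g hg, hPφ _ (hf.add hg)]
    exact φ.map_add ⟨f, hf⟩ ⟨g, hg⟩
  · exact (hM.1 f hf).trans ((hMφ ⟨f, hf⟩).trans_eq (hPφ f hf).symm)
  · exact (hMφ ⟨f, hf⟩).trans_eq (hPφ f hf).symm
  · simp only [N, map_neg, Submodule.coe_neg, neg_neg, neg_inj] at hφg₀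
    rw [hPφ g₀ hg₀, hφg₀]

end IsCoherentLowerPrevision

section Invariance

variable {X : Type*} (𝒦 : Set (X → ℝ)) (𝒯 : Set (X → X)) (P : (X → ℝ) → ℝ)

def IsWeaklyInvariantOn : Prop := ∀ f ∈ 𝒦, ∀ T ∈ 𝒯, P f ≤ P (f ∘ T)

def IsStronglyInvariantOn : Prop := ∀ f ∈ 𝒦, ∀ T ∈ 𝒯, 0 ≤ P (f - f ∘ T) ∧ 0 ≤ P (f ∘ T - f)

def IsInvariantOn : Prop := ∀ f ∈ 𝒦, ∀ T ∈ 𝒯, P (f ∘ T) = P f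

end Invariance

namespace IsCoherentPrevisionOn

variable {X : Type*} {𝒦 : Set (X → ℝ)} {𝒯 : Set (X → X)} {P : (X → ℝ) → ℝ}

theorem isWeaklyInvariantOn_iff_isInvariantOn (hP : IsCoherentPrevisionOn 𝒦 P)
    (h𝒦g : ∀ f ∈ 𝒦, IsGamble f) (h𝒦neg : ∀ f ∈ 𝒦, -f ∈ 𝒦)
    (h𝒦T : ∀ f ∈ 𝒦, ∀ T ∈ 𝒯, f ∘ T ∈ 𝒦) :
    IsWeaklyInvariantOn 𝒦 𝒯 P ↔ IsInvariantOn 𝒦 𝒯 P := by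
  obtain ⟨Q, hQ, hPQ⟩ := hP
  refine ⟨fun hweak f hf T hT => le_antisymm ?_ (hweak f hf T hT),
    fun hinv f hf T hT => (hinv f hf T hT).ge⟩
  have hfT := h𝒦T f hf T hT
  have h := hweak (-f) (h𝒦neg f hf) T hT
  rw [Pi.neg_comp, hPQ _ (h𝒦neg f hf), hPQ _ (h𝒦neg _ hfT), hQ.map_neg (h𝒦g f hf),
    hQ.map_neg (h𝒦g _ hfT), neg_le_neg_iff] at h
  rwa [hPQ _ hf, hPQ _ hfT]

theorem isStronglyInvariantOn_iff_isInvariantOn (hP : IsCoherentPrevisionOn 𝒦 P)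
    (h𝒦g : ∀ f ∈ 𝒦, IsGamble f) (h𝒦T : ∀ f ∈ 𝒦, ∀ T ∈ 𝒯, f ∘ T ∈ 𝒦)
    (h𝒦diff : ∀ f ∈ 𝒦, ∀ T ∈ 𝒯, (f - f ∘ T) ∈ 𝒦 ∧ (f ∘ T - f) ∈ 𝒦) :
    IsStronglyInvariantOn 𝒦 𝒯 P ↔ IsInvariantOn 𝒦 𝒯 P := by
  obtain ⟨Q, hQ, hPQ⟩ := hP
  refine forall₂_congr fun f hf => forall₂_congr fun T hT => ?_
  obtain ⟨h₁, h₂⟩ := h𝒦diff f hf T hT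
  rw [hPQ _ h₁, hPQ _ h₂, hPQ _ hf, hPQ _ (h𝒦T f hf T hT),
    hQ.eq_iff_zero_le_map_sub (h𝒦g f hf) ((h𝒦g f hf).comp T)]

end IsCoherentPrevisionOn

namespace IsCoherentLowerPrevisionOn

variable {X : Type*} {𝒦 : Set (X → ℝ)} {𝒯 : Set (X → X)} {L : (X → ℝ) → ℝ}

theorem le_of_forall_dominating (hL : IsCoherentLowerPrevisionOn 𝒦 L)
    (h𝒦g : ∀ f ∈ 𝒦, IsGamble f) {h : X → ℝ} (hh : h ∈ 𝒦) {c : ℝ}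
    (H : ∀ P, IsCoherentPrevision P → (∀ f ∈ 𝒦, L f ≤ P f) → c ≤ P h) : c ≤ L h := by
  obtain ⟨M, hM, hLM⟩ := hL
  obtain ⟨P, ⟨hP, hMP⟩, hPh⟩ := hM.exists_mem_dominating_eq (h𝒦g h hh)
  rw [hLM h hh, ← hPh]
  exact H P hP fun f hf => (hLM f hf).trans_le (hMP f (h𝒦g f hf))

theorem isStronglyInvariantOn_iff (hL : IsCoherentLowerPrevisionOn 𝒦 L)
    (h𝒦g : ∀ f ∈ 𝒦, IsGamble f)
    (h𝒦diff : ∀ f ∈ 𝒦, ∀ T ∈ 𝒯, (f - f ∘ T) ∈ 𝒦 ∧ (f ∘ T - f) ∈ 𝒦) :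
    IsStronglyInvariantOn 𝒦 𝒯 L ↔
      ∀ P, IsCoherentPrevision P → (∀ f ∈ 𝒦, L f ≤ P f) → IsInvariantOn 𝒦 𝒯 P := by
  have hinv_iff : ∀ P, IsCoherentPrevision P → ∀ f ∈ 𝒦, ∀ T ∈ 𝒯,
      P (f ∘ T) = P f ↔ 0 ≤ P (f - f ∘ T) ∧ 0 ≤ P (f ∘ T - f) := fun P hP f hf T _ =>
    hP.eq_iff_zero_le_map_sub (h𝒦g f hf) ((h𝒦g f hf).comp T)
  constructor
  · intro hstrong P hP hLP f hf T hT
    obtain ⟨h₁, h₂⟩ := h𝒦diff f hf T hT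
    exact (hinv_iff P hP f hf T hT).2
      ⟨(hstrong f hf T hT).1.trans (hLP _ h₁), (hstrong f hf T hT).2.trans (hLP _ h₂)⟩
  · intro hinv f hf T hT
    obtain ⟨h₁, h₂⟩ := h𝒦diff f hf T hT
    have hnonneg := fun P hP hLP => (hinv_iff P hP f hf T hT).1 (hinv P hP hLP f hf T hT)
    exact ⟨hL.le_of_forall_dominating h𝒦g h₁ fun P hP hLP => (hnonneg P hP hLP).1,
      hL.le_of_forall_dominating h𝒦g h₂ fun P hP hLP => (hnonneg P hP hLP).2⟩

end IsCoherentLowerPrevisionOn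

theorem stmt7_general (X : Type*) (𝒯 : Set (X → X))
    (𝒦 : Set (X → ℝ)) (h𝒦g : ∀ f ∈ 𝒦, IsGamble f)
    (h𝒦neg : ∀ f ∈ 𝒦, -f ∈ 𝒦)
    (h𝒦T : ∀ f ∈ 𝒦, ∀ T ∈ 𝒯, f ∘ T ∈ 𝒦)
    (h𝒦diff : ∀ f ∈ 𝒦, ∀ T ∈ 𝒯, (f - f ∘ T) ∈ 𝒦 ∧ (f ∘ T - f) ∈ 𝒦) :
    (∀ P : (X → ℝ) → ℝ, IsCoherentPrevisionOn 𝒦 P →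
      ((∀ f ∈ 𝒦, ∀ T ∈ 𝒯, P f ≤ P (f ∘ T)) ↔
        (∀ f ∈ 𝒦, ∀ T ∈ 𝒯, 0 ≤ P (f - f ∘ T) ∧ 0 ≤ P (f ∘ T - f)))) ∧
    (∀ L : (X → ℝ) → ℝ, IsCoherentLowerPrevisionOn 𝒦 L →
      ((∀ f ∈ 𝒦, ∀ T ∈ 𝒯, 0 ≤ L (f - f ∘ T) ∧ 0 ≤ L (f ∘ T - f)) ↔
        (∀ P : (X → ℝ) → ℝ, IsCoherentPrevision P → (∀ f ∈ 𝒦, L f ≤ P f) →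
          ∀ f ∈ 𝒦, ∀ T ∈ 𝒯, P (f ∘ T) = P f))) :=
  ⟨fun P hP => (hP.isWeaklyInvariantOn_iff_isInvariantOn h𝒦g h𝒦neg h𝒦T).trans
      (hP.isStronglyInvariantOn_iff_isInvariantOn h𝒦g h𝒦T h𝒦diff).symm,
    fun L hL => hL.isStronglyInvariantOn_iff h𝒦g h𝒦diff⟩

theorem stmt7 (X : Type*) [Nonempty X] (𝒯 : Set (X → X))
    (h𝒯 : IsTransformationMonoid 𝒯)
    (𝒦 : Set (X → ℝ)) (h𝒦g : ∀ f ∈ 𝒦, IsGamble f)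
    (h𝒦neg : ∀ f ∈ 𝒦, -f ∈ 𝒦)
    (h𝒦T : ∀ f ∈ 𝒦, ∀ T ∈ 𝒯, f ∘ T ∈ 𝒦)
    (h𝒦diff : ∀ f ∈ 𝒦, ∀ T ∈ 𝒯, (f - f ∘ T) ∈ 𝒦 ∧ (f ∘ T - f) ∈ 𝒦) :
    (∀ P : (X → ℝ) → ℝ, IsCoherentPrevisionOn 𝒦 P →
      ((∀ f ∈ 𝒦, ∀ T ∈ 𝒯, P f ≤ P (f ∘ T)) ↔
        (∀ f ∈ 𝒦, ∀ T ∈ 𝒯, 0 ≤ P (f - f ∘ T) ∧ 0 ≤ P (f ∘ T - f)))) ∧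
    (∀ L : (X → ℝ) → ℝ, IsCoherentLowerPrevisionOn 𝒦 L →
      ((∀ f ∈ 𝒦, ∀ T ∈ 𝒯, 0 ≤ L (f - f ∘ T) ∧ 0 ≤ L (f ∘ T - f)) ↔
        (∀ P : (X → ℝ) → ℝ, IsCoherentPrevision P → (∀ f ∈ 𝒦, L f ≤ P f) →
          ∀ f ∈ 𝒦, ∀ T ∈ 𝒯, P (f ∘ T) = P f))) :=
  stmt7_general X 𝒯 𝒦 h𝒦g h𝒦neg h𝒦T h𝒦diff
end

section
/- Let L be a coherent lower prevision on a nonempty set X and let 𝒯 be a monoid of transformations of X. Then: (i) L is weakly 𝒯-invariant (L(f∘T) ≥ L(f) for all gambles f and T ∈ 𝒯) if and only if for every gamble f, every n ≥ 1, all T₁,…,T_n ∈ 𝒯 and all λ₁,…,λ_n ≥ 0 with Σ_{k=1}^n λ_k = 1, one has L(Σ_{k=1}^n λ_k (f∘T_k)) ≥ L(f); (ii) L is strongly 𝒯-invariant (L(f − f∘T) ≥ 0 and L(f∘T − f) ≥ 0 for all gambles f and T ∈ 𝒯) if and only if for every such convex combination one has L(Σ_{k=1}^n λ_k (f∘T_k)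 − f) ≥ 0 and L(f − Σ_{k=1}^n λ_k (f∘T_k)) ≥ 0. -/
open Bornology Pointwise

namespace IsGamble

variable {X : Type*}

theorem iff_isBounded_range {f : X → ℝ} : IsGamble f ↔ IsBounded (Set.range f) := by
  rw [isBounded_iff_bddBelow_bddAbove, IsGamble, and_comm]

theorem comp_s9 {f : X → ℝ} (hf : IsGamble f) (T : X → X) : IsGamble (f ∘ T) :=
  ⟨hf.1.mono (Set.range_comp_subset_range T f), hf.2.mono (Set.range_comp_subset_range T f)⟩

theorem zero : IsGamble (0 : X → ℝ) :=
  iff_isBounded_range.2 ((Set.finite_singleton 0).subset Set.range_const_subset).isBounded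

theorem add_s9 {f g : X → ℝ} (hf : IsGamble f) (hg : IsGamble g) : IsGamble (f + g) :=
  ⟨hf.1.range_add hg.1, hf.2.range_add hg.2⟩

theorem smul_s9 {f : X → ℝ} (hf : IsGamble f) (c : ℝ) : IsGamble (c • f) := by
  rw [iff_isBounded_range, Pi.smul_def, Set.range_smul]
  exact (iff_isBounded_range.1 hf).smul₀ c

theorem sub_s9 {f g : X → ℝ} (hf : IsGamble f) (hg : IsGamble g) : IsGamble (f - g) := by
  rw [sub_eq_add_neg, ← neg_one_smul ℝ g]
  exact hf.add_s9 (hg.smul_s9 _)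

theorem sum {ι : Type*} (s : Finset ι) {g : ι → X → ℝ} (hg : ∀ i ∈ s, IsGamble (g i)) :
    IsGamble (∑ i ∈ s, g i) :=
  Finset.sum_induction g IsGamble (fun _ _ => add_s9) zero hg

end IsGamble

namespace IsCoherentLowerPrevision

variable {X ι : Type*} {L : (X → ℝ) → ℝ}

theorem map_zero (hL : IsCoherentLowerPrevision L) : L 0 = 0 := by
  simpa using hL.2.2 0 IsGamble.zero 0 le_rfl

theorem sum_le_map_sum (hL : IsCoherentLowerPrevision L) (s : Finset ι) {g : ι → X → ℝ}
    (hg : ∀ i ∈ s, IsGamble (g i)) : ∑ i ∈ s, L (g i) ≤ L (∑ i ∈ s, g i) := by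
  induction s using Finset.cons_induction with
  | empty => simp [hL.map_zero]
  | cons a s ha ih =>
    rw [Finset.sum_cons, Finset.sum_cons]
    have hs : ∀ i ∈ s, IsGamble (g i) := fun i hi => hg i (Finset.mem_cons_of_mem hi)
    have hsum : IsGamble (∑ i ∈ s, g i) := IsGamble.sum s hs
    linarith [ih hs, hL.2.1 (g a) _ (hg a (Finset.mem_cons_self a s)) hsum]

theorem le_map_sum_smul (hL : IsCoherentLowerPrevision L) (s : Finset ι) {g : ι → X → ℝ}
    {w : ι → ℝ} {c : ℝ} (hg : ∀ i ∈ s, IsGamble (g i)) (hw : ∀ i ∈ s, 0 ≤ w i)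
    (hw₁ : ∑ i ∈ s, w i = 1) (hc : ∀ i ∈ s, c ≤ L (g i)) :
    c ≤ L (∑ i ∈ s, w i • g i) :=
  calc c = ∑ i ∈ s, w i * c := by rw [← Finset.sum_mul, hw₁, one_mul]
    _ ≤ ∑ i ∈ s, w i * L (g i) :=
      Finset.sum_le_sum fun i hi => mul_le_mul_of_nonneg_left (hc i hi) (hw i hi)
    _ = ∑ i ∈ s, L (w i • g i) :=
      Finset.sum_congr rfl fun i hi => (hL.2.2 _ (hg i hi) _ (hw i hi)).symm
    _ ≤ L (∑ i ∈ s, w i • g i) :=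
      hL.sum_le_map_sum s fun i hi => (hg i hi).smul_s9 _

end IsCoherentLowerPrevision

section ConvexCombination

variable {X ι : Type*} (s : Finset ι) (w : ι → ℝ) (f : X → ℝ) (T : ι → X → X)

theorem sum_mul_comp_eq_sum_smul :
    (fun x => ∑ i ∈ s, w i * f (T i x)) = ∑ i ∈ s, w i • (f ∘ T i) := by
  ext x
  simp [Finset.sum_apply]

variable {s w}

theorem sum_mul_comp_sub_eq_sum_smul (hw₁ : ∑ i ∈ s, w i = 1) :
    (fun x => ∑ i ∈ s, w i * f (T i x)) - f = ∑ i ∈ s, w i • (f ∘ T i - f) := by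
  simp only [sum_mul_comp_eq_sum_smul, smul_sub, Finset.sum_sub_distrib, ← Finset.sum_smul, hw₁,
    one_smul]

theorem sub_sum_mul_comp_eq_sum_smul (hw₁ : ∑ i ∈ s, w i = 1) :
    (f - fun x => ∑ i ∈ s, w i * f (T i x)) = ∑ i ∈ s, w i • (f - f ∘ T i) := by
  simp only [sum_mul_comp_eq_sum_smul, smul_sub, Finset.sum_sub_distrib, ← Finset.sum_smul, hw₁,
    one_smul]

theorem sum_fin_one_mul_comp (T : X → X) :
    (fun x => ∑ _i : Fin 1, (1 : ℝ) * f (T x)) = f ∘ T := by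
  ext x
  simp

end ConvexCombination

theorem stmt9_general (X : Type*) (𝒯 : Set (X → X))
    (L : (X → ℝ) → ℝ) (hL : IsCoherentLowerPrevision L) :
    ((∀ f : X → ℝ, IsGamble f → ∀ T ∈ 𝒯, L f ≤ L (f ∘ T)) ↔
      (∀ f : X → ℝ, IsGamble f →
        ∀ (n : ℕ) (Ts : Fin n → X → X) (lam : Fin n → ℝ),
          (∀ k, Ts k ∈ 𝒯) → (∀ k, 0 ≤ lam k) → (∑ k, lam k = 1) →
          L f ≤ L (fun x => ∑ k, lam k * f (Ts k x)))) ∧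
    ((∀ f : X → ℝ, IsGamble f → ∀ T ∈ 𝒯,
        0 ≤ L (f - f ∘ T) ∧ 0 ≤ L (f ∘ T - f)) ↔
      (∀ f : X → ℝ, IsGamble f →
        ∀ (n : ℕ) (Ts : Fin n → X → X) (lam : Fin n → ℝ),
          (∀ k, Ts k ∈ 𝒯) → (∀ k, 0 ≤ lam k) → (∑ k, lam k = 1) →
          0 ≤ L ((fun x => ∑ k, lam k * f (Ts k x)) - f) ∧
          0 ≤ L (f - fun x => ∑ k, lam k * f (Ts k x)))) := by
  refine ⟨⟨fun h f hf n Ts lam hT hlam hsum => ?_, fun h f hf T hT => ?_⟩,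
    ⟨fun h f hf n Ts lam hT hlam hsum => ⟨?_, ?_⟩, fun h f hf T hT => ?_⟩⟩
  · rw [sum_mul_comp_eq_sum_smul]
    exact hL.le_map_sum_smul _ (fun _ _ => hf.comp_s9 _) (fun k _ => hlam k) hsum
      fun k _ => h f hf _ (hT k)
  · simpa only [sum_fin_one_mul_comp] using
      h f hf 1 (fun _ => T) (fun _ => 1) (fun _ => hT) (fun _ => zero_le_one) (by simp)
  · rw [sum_mul_comp_sub_eq_sum_smul _ _ hsum]
    exact hL.le_map_sum_smul _ (fun _ _ => (hf.comp_s9 _).sub_s9 hf) (fun k _ => hlam k) hsum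
      fun k _ => (h f hf _ (hT k)).2
  · rw [sub_sum_mul_comp_eq_sum_smul _ _ hsum]
    exact hL.le_map_sum_smul _ (fun _ _ => hf.sub_s9 (hf.comp_s9 _)) (fun k _ => hlam k) hsum
      fun k _ => (h f hf _ (hT k)).1
  · simpa only [sum_fin_one_mul_comp, and_comm] using
      h f hf 1 (fun _ => T) (fun _ => 1) (fun _ => hT) (fun _ => zero_le_one) (by simp)

theorem stmt9 (X : Type*) [Nonempty X] (𝒯 : Set (X → X))
    (h𝒯 : IsTransformationMonoid 𝒯)
    (L : (X → ℝ) → ℝ) (hL : IsCoherentLowerPrevision L) :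
    ((∀ f : X → ℝ, IsGamble f → ∀ T ∈ 𝒯, L f ≤ L (f ∘ T)) ↔
      (∀ f : X → ℝ, IsGamble f →
        ∀ (n : ℕ) (Ts : Fin n → X → X) (lam : Fin n → ℝ),
          (∀ k, Ts k ∈ 𝒯) → (∀ k, 0 ≤ lam k) → (∑ k, lam k = 1) →
          L f ≤ L (fun x => ∑ k, lam k * f (Ts k x)))) ∧
    ((∀ f : X → ℝ, IsGamble f → ∀ T ∈ 𝒯,
        0 ≤ L (f - f ∘ T) ∧ 0 ≤ L (f ∘ T - f)) ↔
      (∀ f : X → ℝ, IsGamble f →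
        ∀ (n : ℕ) (Ts : Fin n → X → X) (lam : Fin n → ℝ),
          (∀ k, Ts k ∈ 𝒯) → (∀ k, 0 ≤ lam k) → (∑ k, lam k = 1) →
          0 ≤ L ((fun x => ∑ k, lam k * f (Ts k x)) - f) ∧
          0 ≤ L (f - fun x => ∑ k, lam k * f (Ts k x)))) :=
  stmt9_general X 𝒯 L hL
end
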